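/- If f1 is a type-II graph homomorphism from G1 to G2 and f2 is a surjective type-II graph homomorphism from H1 to H2, then the map (g,h) ↦ (f1(g), f2(h)) is a type-II graph homomorphism from G1[H1] to G2[H2]. -/

import Mathlib

open SimpleGraph

/-- A fall coloring: a proper coloring in which every vertex sees all colors
on its closed neighborhood. -/
def IsFallColoring {α : Type*} (G : SimpleGraph α) {k : ℕ} (f : α → Fin k) : Prop :=
  (∀ u v, G.Adj u v → f u ≠ f v) ∧
  (∀ v (c : Fin k), ∃ u, (u = v ∨ G.Adj v u) ∧ f u = c)

/-- The set of positive integers `k` such that `G` has a fall `k`-coloring. -/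
def Fall {α : Type*} (G : SimpleGraph α) : Set ℕ :=
  {k | 0 < k ∧ ∃ f : α → Fin k, IsFallColoring G f}

/-- The lexicographic product `G[H]`. -/
def lexProd {α β : Type*} (G : SimpleGraph α) (H : SimpleGraph β) : SimpleGraph (α × β) :=
  SimpleGraph.fromRel (fun p q => G.Adj p.1 q.1 ∨ (p.1 = q.1 ∧ H.Adj p.2 q.2))

/-- The categorical (tensor) product `G × H`. -/
def tensorProd {α β : Type*} (G : SimpleGraph α) (H : SimpleGraph β) : SimpleGraph (α × β) :=
  SimpleGraph.fromRel (fun p q => G.Adj p.1 q.1 ∧ H.Adj p.2 q.2)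

/-- A type-II graph homomorphism from `G` to `H`. -/
def IsTypeII {α β : Type*} (G : SimpleGraph α) (H : SimpleGraph β) (f : α → β) : Prop :=
  (∀ u v, G.Adj u v → H.Adj (f u) (f v)) ∧
  (∀ u₁ v₁, H.Adj u₁ v₁ → ∀ v, f v = v₁ → ∃ u, f u = u₁ ∧ G.Adj u v)

theorem lexProd_adj {α β : Type*} {G : SimpleGraph α} {H : SimpleGraph β} {p q : α × β} :
    (lexProd G H).Adj p q ↔ G.Adj p.1 q.1 ∨ (p.1 = q.1 ∧ H.Adj p.2 q.2) := by
  simp only [lexProd, fromRel_adj]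
  constructor
  · rintro ⟨-, h | h⟩
    exacts [h, h.imp (fun h => h.symm) fun ⟨he, h⟩ => ⟨he.symm, h.symm⟩]
  · refine fun h => ⟨?_, Or.inl h⟩
    rintro rfl
    rcases h with h | ⟨-, h⟩
    exacts [h.ne rfl, h.ne rfl]

section Map

variable {α₁ α₂ β₁ β₂ : Type*} {G₁ : SimpleGraph α₁} {G₂ : SimpleGraph α₂}
  {H₁ : SimpleGraph β₁} {H₂ : SimpleGraph β₂} {f₁ : α₁ → α₂} {f₂ : β₁ → β₂}

theorem lexProd_adj_map (h₁ : ∀ u v, G₁.Adj u v → G₂.Adj (f₁ u) (f₁ v))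
    (h₂ : ∀ u v, H₁.Adj u v → H₂.Adj (f₂ u) (f₂ v)) {p q : α₁ × β₁}
    (h : (lexProd G₁ H₁).Adj p q) : (lexProd G₂ H₂).Adj (Prod.map f₁ f₂ p) (Prod.map f₁ f₂ q) := by
  rcases lexProd_adj.1 h with h | ⟨he, h⟩
  · exact lexProd_adj.2 (Or.inl (h₁ _ _ h))
  · exact lexProd_adj.2 (Or.inr ⟨congrArg f₁ he, h₂ _ _ h⟩)

/-- Over an edge of `G₂` the second coordinate of the lift is arbitrary, which is why `f₂` has to
be surjective; over an edge inside a fibre `{x} × H₂` the first coordinate is kept. -/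
theorem exists_lexProd_adj_of_map_eq
    (h₁ : ∀ u₁ v₁, G₂.Adj u₁ v₁ → ∀ v, f₁ v = v₁ → ∃ u, f₁ u = u₁ ∧ G₁.Adj u v)
    (h₂ : ∀ u₁ v₁, H₂.Adj u₁ v₁ → ∀ v, f₂ v = v₁ → ∃ u, f₂ u = u₁ ∧ H₁.Adj u v)
    (hsurj : Function.Surjective f₂) {p' q' : α₂ × β₂} (hadj : (lexProd G₂ H₂).Adj p' q')
    (q : α₁ × β₁) (hq : Prod.map f₁ f₂ q = q') :
    ∃ p, Prod.map f₁ f₂ p = p' ∧ (lexProd G₁ H₁).Adj p q := by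
  subst hq
  obtain ⟨x, y⟩ := p'
  rcases lexProd_adj.1 hadj with h | ⟨rfl, h⟩
  · obtain ⟨a, rfl, ha⟩ := h₁ _ _ h q.1 rfl
    obtain ⟨b, rfl⟩ := hsurj y
    exact ⟨(a, b), rfl, lexProd_adj.2 (Or.inl ha)⟩
  · obtain ⟨b, rfl, hb⟩ := h₂ _ _ h q.2 rfl
    exact ⟨(q.1, b), rfl, lexProd_adj.2 (Or.inr ⟨rfl, hb⟩)⟩

end Map

/-- type-II homomorphisms and lexicographic products. -/
theorem isTypeII_lexProd {α₁ α₂ β₁ β₂ : Type*}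
    (G₁ : SimpleGraph α₁) (G₂ : SimpleGraph α₂) (H₁ : SimpleGraph β₁) (H₂ : SimpleGraph β₂)
    (f₁ : α₁ → α₂) (f₂ : β₁ → β₂)
    (hf₁ : IsTypeII G₁ G₂ f₁) (hf₂ : IsTypeII H₁ H₂ f₂) (hsurj : Function.Surjective f₂) :
    IsTypeII (lexProd G₁ H₁) (lexProd G₂ H₂) (fun p => (f₁ p.1, f₂ p.2)) :=
  ⟨fun _ _ => lexProd_adj_map hf₁.1 hf₂.1,
    fun _ _ => exists_lexProd_adj_of_map_eq hf₁.2 hf₂.2 hsurj⟩
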